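/- For the renewal process on Z^+ started at 0 with interarrival law η{j} = (α/Γ(2-α))·Γ(j-α+1)/Γ(j+2) (j ≥ 1) in the case α = 3/2, the renewal measure satisfies P(j ∈ S) = (1/2)·(Γ(j+1/2)/(Γ(1/2)Γ(j+1)) + 1) for all j ≥ 0; equivalently, Σ_{j≥0} P(j ∈ S) s^j = (1/2)(1/√(1-s) + 1/(1-s)) for s ∈ (0,1). -/

import Mathlib

/-!
Write `a n = C(2n, n) / 4ⁿ = Γ(n + 1/2) / (Γ(1/2) n!)`. Then
`η (k + 1) = (3/2) a k / ((k+1)(k+2))`, and since the renewal equation determines `u`, it suffices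
to check that `(a n + 1) / 2` solves it. Over the antidiagonal `p + q = n` this needs two
convolutions: `∑ η (q + 1)` telescopes, and `∑ a p a q / ((q+1)(q+2))` satisfies a first-order
recurrence in `n` with a Zeilberger certificate. The generating function then follows from
`∑ a n sⁿ = (1 - s)^(-1/2)`, which holds because its Cauchy square has coefficients
`∑_{p+q=n} a p a q = 1`.
-/

open Real Finset

theorem Finset.Nat.sum_antidiagonal_telescope {M : Type*} [AddCommGroup M] (G : ℕ × ℕ → M)
    (n : ℕ) : ∑ p ∈ antidiagonal n, (G (p.1, p.2 + 1) - G (p.1 + 1, p.2))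
      = G (0, n + 1) - G (n + 1, 0) := by
  have h := (Nat.sum_antidiagonal_succ (n := n) (f := G)).symm.trans Nat.sum_antidiagonal_succ'
  rw [sum_sub_distrib, sub_eq_sub_iff_add_eq_add, h, add_comm]

theorem eq_of_renewal_equation {R : Type*} [Mul R] [AddCommMonoid R] {η u v : ℕ → R}
    (h0 : u 0 = v 0)
    (hu : ∀ i : ℕ, 1 ≤ i → u i = ∑ j ∈ range i, η (i - j) * u j)
    (hv : ∀ i : ℕ, 1 ≤ i → v i = ∑ j ∈ range i, η (i - j) * v j) : u = v := by
  funext i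
  induction i using Nat.strong_induction_on with
  | _ i ih =>
    rcases Nat.eq_zero_or_pos i with rfl | hi
    · exact h0
    · rw [hu i hi, hv i hi]
      exact sum_congr rfl fun j hj => by rw [ih j (mem_range.mp hj)]

noncomputable def normCentralBinom (n : ℕ) : ℝ := n.centralBinom / 4 ^ n

@[simp]
theorem normCentralBinom_zero : normCentralBinom 0 = 1 := by
  simp [normCentralBinom]

theorem normCentralBinom_succ (n : ℕ) :
    normCentralBinom (n + 1) = (2 * n + 1) / (2 * n + 2) * normCentralBinom n := by
  have h : ((n + 1 : ℕ) : ℝ) * (n + 1).centralBinom = 2 * (2 * n + 1) * n.centralBinom := by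
    exact_mod_cast Nat.succ_mul_centralBinom_succ n
  unfold normCentralBinom
  push_cast at h
  field_simp
  rw [pow_succ]
  linear_combination 2 * 4 ^ n * h

theorem normCentralBinom_nonneg (n : ℕ) : 0 ≤ normCentralBinom n := by
  unfold normCentralBinom; positivity

theorem normCentralBinom_le_one (n : ℕ) : normCentralBinom n ≤ 1 := by
  rw [normCentralBinom, div_le_one (by positivity)]
  exact_mod_cast Nat.centralBinom_le_four_pow n

theorem Gamma_nat_add_half_eq_mul_normCentralBinom (n : ℕ) :
    Gamma (n + 1 / 2) = Gamma (1 / 2) * Gamma (n + 1) * normCentralBinom n := by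
  induction n with
  | zero => simp
  | succ n ih =>
    push_cast
    rw [add_right_comm, Gamma_add_one (by positivity), Gamma_add_one (by positivity), ih,
      normCentralBinom_succ]
    field_simp

theorem succ_mul_normCentralBinom_succ (n : ℕ) :
    ((n + 1 : ℕ) : ℝ) * normCentralBinom (n + 1) = (n + 1 / 2) * normCentralBinom n := by
  rw [normCentralBinom_succ]; push_cast; field_simp

theorem sum_antidiagonal_normCentralBinom_mul (n : ℕ) :
    ∑ p ∈ antidiagonal n, normCentralBinom p.1 * normCentralBinom p.2 = 1 := by
  induction n with
  | zero => simp
  | succ n ih =>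
    refine (mul_right_inj' (by positivity : ((n + 1 : ℕ) : ℝ) ≠ 0)).mp ?_
    calc ((n + 1 : ℕ) : ℝ) * ∑ p ∈ antidiagonal (n + 1),
          normCentralBinom p.1 * normCentralBinom p.2
        = ∑ p ∈ antidiagonal (n + 1), (p.1 : ℝ) * normCentralBinom p.1 * normCentralBinom p.2
          + ∑ p ∈ antidiagonal (n + 1),
            normCentralBinom p.1 * (p.2 * normCentralBinom p.2) := by
          rw [← sum_add_distrib, mul_sum]
          refine sum_congr rfl fun p hp => ?_
          rw [← mem_antidiagonal.mp hp]; push_cast; ring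
      _ = ∑ p ∈ antidiagonal n, (p.1 + 1 / 2) * normCentralBinom p.1 * normCentralBinom p.2
          + ∑ p ∈ antidiagonal n,
            normCentralBinom p.1 * ((p.2 + 1 / 2) * normCentralBinom p.2) := by
          rw [Nat.sum_antidiagonal_succ, Nat.sum_antidiagonal_succ']
          simp only [succ_mul_normCentralBinom_succ, Nat.cast_zero, zero_mul, mul_zero, zero_add]
      _ = ((n + 1 : ℕ) : ℝ) * ∑ p ∈ antidiagonal n,
          normCentralBinom p.1 * normCentralBinom p.2 := by
          rw [← sum_add_distrib, mul_sum]
          refine sum_congr rfl fun p hp => ?_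
          rw [← mem_antidiagonal.mp hp]; push_cast; ring
      _ = ((n + 1 : ℕ) : ℝ) * 1 := by rw [ih]

theorem summable_normCentralBinom_mul_pow {s : ℝ} (hs0 : 0 ≤ s) (hs1 : s < 1) :
    Summable fun n => normCentralBinom n * s ^ n :=
  (summable_geometric_of_lt_one hs0 hs1).of_nonneg_of_le
    (fun n => mul_nonneg (normCentralBinom_nonneg n) (pow_nonneg hs0 n))
    (fun n => mul_le_of_le_one_left (pow_nonneg hs0 n) (normCentralBinom_le_one n))

theorem tsum_normCentralBinom_mul_pow {s : ℝ} (hs0 : 0 ≤ s) (hs1 : s < 1) :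
    ∑' n, normCentralBinom n * s ^ n = 1 / √(1 - s) := by
  have hf := summable_normCentralBinom_mul_pow hs0 hs1
  have hcauchy (n : ℕ) : ∑ p ∈ antidiagonal n,
      normCentralBinom p.1 * s ^ p.1 * (normCentralBinom p.2 * s ^ p.2) = s ^ n := by
    rw [← one_mul (s ^ n), ← sum_antidiagonal_normCentralBinom_mul n, sum_mul]
    refine sum_congr rfl fun p hp => ?_
    rw [← mem_antidiagonal.mp hp, pow_add]; ring
  have hsq : (∑' n, normCentralBinom n * s ^ n) ^ 2 = (1 - s)⁻¹ := by
    rw [sq, tsum_mul_tsum_eq_tsum_sum_antidiagonal_of_summable_norm hf.norm hf.norm,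
      tsum_congr hcauchy, tsum_geometric_of_lt_one hs0 hs1]
  rw [← sqrt_sq (tsum_nonneg fun n => mul_nonneg (normCentralBinom_nonneg n) (pow_nonneg hs0 n)),
    hsq, sqrt_inv, one_div]

theorem sum_antidiagonal_normCentralBinom_div_succ (n : ℕ) :
    ((n : ℝ) + 3) ^ 2 * ∑ p ∈ antidiagonal (n + 1),
        normCentralBinom p.1 * normCentralBinom p.2 / ((p.2 + 1) * (p.2 + 2))
      = (2 * n + 3) * (n + 4) / 2 * ∑ p ∈ antidiagonal n,
        normCentralBinom p.1 * normCentralBinom p.2 / ((p.2 + 1) * (p.2 + 2)) := by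
  -- Zeilberger certificate: it turns the recurrence, summand by summand, into a telescoping sum.
  set G : ℕ × ℕ → ℝ := fun p =>
    normCentralBinom p.1 * normCentralBinom p.2 * p.2 * (p.1 - p.2 - 2) / ((p.1 + p.2) * (p.2 + 1))
    with hG
  have hcert (p q : ℕ) :
      ((p : ℝ) + q + 3) ^ 2
          * (normCentralBinom (p + 1) * normCentralBinom q / ((q + 1) * (q + 2)))
        - (2 * (p + q) + 3) * (p + q + 4) / 2
          * (normCentralBinom p * normCentralBinom q / ((q + 1) * (q + 2)))
        = G (p, q + 1) - G (p + 1, q) := by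
    simp only [hG]
    push_cast
    rw [normCentralBinom_succ p, normCentralBinom_succ q]
    field_simp
    ring
  have htel : ((n : ℝ) + 3) ^ 2 * ∑ p ∈ antidiagonal n,
        normCentralBinom (p.1 + 1) * normCentralBinom p.2 / ((p.2 + 1) * (p.2 + 2))
      - (2 * n + 3) * (n + 4) / 2 * ∑ p ∈ antidiagonal n,
        normCentralBinom p.1 * normCentralBinom p.2 / ((p.2 + 1) * (p.2 + 2))
      = G (0, n + 1) - G (n + 1, 0) := by
    rw [← Nat.sum_antidiagonal_telescope, mul_sum, mul_sum, ← sum_sub_distrib]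
    refine sum_congr rfl fun p hp => ?_
    rw [← hcert, ← mem_antidiagonal.mp hp]
    push_cast
    ring
  have hboundary :
      G (0, n + 1) - G (n + 1, 0) = -(normCentralBinom (n + 1) * (n + 3) / (n + 2)) := by
    simp only [hG, normCentralBinom_zero]
    push_cast
    field_simp
    ring
  have hcorner : ((n : ℝ) + 3) ^ 2 * (normCentralBinom 0 * normCentralBinom (n + 1)
      / ((((n + 1 : ℕ) : ℝ) + 1) * (((n + 1 : ℕ) : ℝ) + 2)))
      = normCentralBinom (n + 1) * (n + 3) / (n + 2) := by
    rw [normCentralBinom_zero]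
    push_cast
    field_simp
    ring
  rw [Nat.sum_antidiagonal_succ, mul_add, hcorner]
  linarith

theorem sum_antidiagonal_normCentralBinom_div (n : ℕ) :
    ∑ p ∈ antidiagonal n, normCentralBinom p.1 * normCentralBinom p.2 / ((p.2 + 1) * (p.2 + 2))
      = 2 / 3 * normCentralBinom (n + 1) * (n + 3) / (n + 2) := by
  induction n with
  | zero => norm_num [normCentralBinom_succ]
  | succ n ih =>
    refine mul_left_cancel₀ (by positivity : ((n : ℝ) + 3) ^ 2 ≠ 0) ?_
    rw [sum_antidiagonal_normCentralBinom_div_succ, ih, normCentralBinom_succ (n + 1)]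
    push_cast
    field_simp
    ring

section Interarrival

variable {η : ℕ → ℝ}
  (hη : ∀ k : ℕ, η (k + 1) = 3 / 2 * normCentralBinom k / ((k + 1) * (k + 2)))
include hη

theorem sum_antidiagonal_interarrival (n : ℕ) :
    ∑ p ∈ antidiagonal n, η (p.2 + 1) = 1 - normCentralBinom (n + 1) / (n + 2) := by
  induction n with
  | zero => norm_num [hη, normCentralBinom_succ]
  | succ n ih =>
    rw [Nat.sum_antidiagonal_succ, ih, hη, normCentralBinom_succ (n + 1)]
    push_cast
    field_simp
    ring

theorem sum_antidiagonal_normCentralBinom_mul_interarrival (n : ℕ) :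
    ∑ p ∈ antidiagonal n, normCentralBinom p.1 * η (p.2 + 1)
      = normCentralBinom (n + 1) * (n + 3) / (n + 2) := by
  have hterm (p : ℕ × ℕ) : normCentralBinom p.1 * η (p.2 + 1)
      = 3 / 2 * (normCentralBinom p.1 * normCentralBinom p.2 / ((p.2 + 1) * (p.2 + 2))) := by
    rw [hη]; ring
  rw [sum_congr rfl fun p _ => hterm p, ← mul_sum, sum_antidiagonal_normCentralBinom_div]
  ring

theorem renewal_equation_normCentralBinom {i : ℕ} (hi : 1 ≤ i) :
    (normCentralBinom i + 1) / 2
      = ∑ j ∈ range i, η (i - j) * ((normCentralBinom j + 1) / 2) := by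
  obtain ⟨n, rfl⟩ := Nat.exists_eq_add_of_le' hi
  have hrange : ∑ j ∈ range (n + 1), η (n + 1 - j) * ((normCentralBinom j + 1) / 2)
      = ∑ p ∈ antidiagonal n, η (p.2 + 1) * ((normCentralBinom p.1 + 1) / 2) := by
    rw [Nat.sum_antidiagonal_eq_sum_range_succ
      (fun p q => η (q + 1) * ((normCentralBinom p + 1) / 2))]
    refine sum_congr rfl fun j hj => ?_
    rw [Nat.sub_add_comm (Nat.lt_succ_iff.mp (mem_range.mp hj))]
  have hsplit : ∑ p ∈ antidiagonal n, η (p.2 + 1) * ((normCentralBinom p.1 + 1) / 2)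
      = (∑ p ∈ antidiagonal n, normCentralBinom p.1 * η (p.2 + 1)
        + ∑ p ∈ antidiagonal n, η (p.2 + 1)) / 2 := by
    rw [← sum_add_distrib, sum_div]
    exact sum_congr rfl fun p _ => by ring
  rw [hrange, hsplit, sum_antidiagonal_normCentralBinom_mul_interarrival hη,
    sum_antidiagonal_interarrival hη]
  field_simp
  ring

end Interarrival

theorem interarrival_eq_of_gamma {η : ℕ → ℝ}
    (hη : ∀ j : ℕ, 1 ≤ j →
      η j = (3/2) / Gamma (2 - 3/2) * (Gamma ((j : ℝ) - 3/2 + 1) / Gamma ((j : ℝ) + 2)))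
    (k : ℕ) : η (k + 1) = 3 / 2 * normCentralBinom k / ((k + 1) * (k + 2)) := by
  have harg : ((k + 1 : ℕ) : ℝ) - 3 / 2 + 1 = k + 1 / 2 := by push_cast; ring
  have hden : ((k + 1 : ℕ) : ℝ) + 2 = (k + 1 + 1) + 1 := by push_cast; ring
  rw [hη (k + 1) (Nat.le_add_left 1 k), harg, hden, Gamma_add_one (by positivity),
    Gamma_add_one (by positivity), Gamma_nat_add_half_eq_mul_normCentralBinom,
    show (2 : ℝ) - 3 / 2 = 1 / 2 by norm_num]
  have hΓ : Gamma (1 / 2) ≠ 0 := (Gamma_pos_of_pos (by norm_num)).ne'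
  have hΓk : Gamma (k + 1) ≠ 0 := (Gamma_pos_of_pos (by positivity)).ne'
  field_simp
  ring

/-- Renewal measure of the range of the fixation line of the Beta(1/2,3/2)-coalescent
(case α = 3/2): interarrival law `η j = (α/Γ(2-α)) Γ(j-α+1)/Γ(j+2)` with `α = 3/2`. -/
theorem stmt_9 (η u : ℕ → ℝ)
    (hη : ∀ j : ℕ, 1 ≤ j →
      η j = (3/2) / Real.Gamma (2 - 3/2) *
        (Real.Gamma ((j : ℝ) - 3/2 + 1) / Real.Gamma ((j : ℝ) + 2)))
    (hu0 : u 0 = 1)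
    (hu : ∀ i : ℕ, 1 ≤ i → u i = ∑ j ∈ Finset.range i, η (i - j) * u j) :
    (∀ j : ℕ, u j = 1/2 *
        (Real.Gamma ((j : ℝ) + 1/2) / (Real.Gamma (1/2) * Real.Gamma ((j : ℝ) + 1)) + 1)) ∧
    ∀ s ∈ Set.Ioo (0:ℝ) 1,
      (∑' j : ℕ, u j * s ^ j) = 1/2 * (1 / Real.sqrt (1 - s) + 1 / (1 - s)) := by
  have hu_eq : u = fun j => (normCentralBinom j + 1) / 2 :=
    eq_of_renewal_equation (by rw [hu0, normCentralBinom_zero]; norm_num) hu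
      fun _ hi => renewal_equation_normCentralBinom (interarrival_eq_of_gamma hη) hi
  subst hu_eq
  refine ⟨fun j => ?_, fun s ⟨hs0, hs1⟩ => ?_⟩
  · have hΓ : Gamma (1 / 2) ≠ 0 := (Gamma_pos_of_pos (by norm_num)).ne'
    have hΓj : Gamma (j + 1) ≠ 0 := (Gamma_pos_of_pos (by positivity)).ne'
    rw [Gamma_nat_add_half_eq_mul_normCentralBinom]
    field_simp
  · have hterm (j : ℕ) :
        (normCentralBinom j + 1) / 2 * s ^ j = (normCentralBinom j * s ^ j + s ^ j) / 2 := by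
      ring
    rw [tsum_congr hterm, tsum_div_const, (summable_normCentralBinom_mul_pow hs0.le hs1).tsum_add
      (summable_geometric_of_lt_one hs0.le hs1), tsum_normCentralBinom_mul_pow hs0.le hs1,
      tsum_geometric_of_lt_one hs0.le hs1]
    ring
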